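/- arXiv:1611.04629 — 7 statements merged into one kernel-verified Lean document; each statement's English description precedes it below -/
import Mathlib

section
/- Let n ∈ ℕ and let A, B be real matrices of sizes n×n and n×R. Suppose V : ℝ → Matrix(n,n,ℝ) is differentiable and satisfies V'(t) = A · V(t) + V(t) · Aᵀ + B·Bᵀ for all t ≥ 0, and V* ∈ Matrix(n,n,ℝ) satisfies A · V* + V* · Aᵀ + B·Bᵀ = 0. Then for all t ≥ 0, ‖V(t) − V*‖₂ ≤ ‖exp(tA)‖₂² · ‖V(0) − V*‖₂. -/
/-!
`W = V - V*` solves the homogeneous equation `W' = A W + W Aᵀ`, and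
`s ↦ exp((t - s)A) W(s) exp((t - s)Aᵀ)` has zero derivative, so
`W(t) = exp(tA) W(0) exp(tA)ᵀ`. Submultiplicativity of the spectral norm and
`‖Mᵀ‖₂ = ‖M‖₂` give the estimate.
-/

open Matrix

/-- The spectral norm (`2`-norm) of a real square matrix: its operator norm as a linear
map between Euclidean (`ℓ²`) spaces. -/
noncomputable def specNorm {n : ℕ} (M : Matrix (Fin n) (Fin n) ℝ) : ℝ :=
  ‖Matrix.toEuclideanCLM (𝕜 := ℝ) M‖

open NormedSpace Set

section BanachAlgebra

variable {𝔸 : Type*} [NormedRing 𝔸] [NormedAlgebra ℝ 𝔸] [CompleteSpace 𝔸]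

theorem eq_exp_smul_mul_mul_exp_smul_of_hasDerivAt {a b : 𝔸} {W : ℝ → 𝔸} {t : ℝ}
    (ht : 0 ≤ t) (hW : ∀ s ∈ Icc 0 t, HasDerivAt W (a * W s + W s * b) s) :
    W t = exp (t • a) * W 0 * exp (t • b) := by
  set G : ℝ → 𝔸 := fun s => exp ((t - s) • a) * W s * exp ((t - s) • b)
  have hG : ∀ s ∈ Icc 0 t, HasDerivAt G 0 s := fun s hs => by
    have hE := (hasDerivAt_exp_smul_const a (t - s)).comp_const_sub t s
    have hF := (hasDerivAt_exp_smul_const' b (t - s)).comp_const_sub t s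
    refine ((hE.fun_mul (hW s hs)).fun_mul hF).congr_deriv ?_
    noncomm_ring
  have hconst : G t = G 0 := constant_of_has_deriv_right_zero
    (fun s hs => (hG s hs).continuousAt.continuousWithinAt)
    (fun s hs => (hG s (Ico_subset_Icc_self hs)).hasDerivWithinAt) t ⟨ht, le_rfl⟩
  simpa [G] using hconst

end BanachAlgebra

open scoped Matrix.Norms.L2Operator

section L2OpNorm

variable {𝕜 : Type*} [RCLike 𝕜] {m n : Type*} [Fintype m] [Fintype n]
  [DecidableEq m] [DecidableEq n]

theorem Matrix.hasDerivAt_of_hasDerivAt_entries {f : 𝕜 → Matrix m n 𝕜}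
    {f' : Matrix m n 𝕜} {t : 𝕜} (h : ∀ i j, HasDerivAt (fun s => f s i j) (f' i j) t) :
    HasDerivAt f f' t := by
  have hsum (M : Matrix m n 𝕜) : M = ∑ i, ∑ j, M i j • single i j (1 : 𝕜) := by
    simpa [smul_single] using matrix_eq_sum_single M
  rw [funext fun s => hsum (f s), hsum f']
  exact .fun_sum fun i _ => .fun_sum fun j _ => (h i j).smul_const _

theorem Matrix.l2_opNorm_transpose (M : Matrix m n ℝ) : ‖Mᵀ‖ = ‖M‖ := by
  rw [← conjTranspose_eq_transpose_of_trivial, l2_opNorm_conjTranspose]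

end L2OpNorm

theorem specNorm_eq_l2_opNorm {n : ℕ} (M : Matrix (Fin n) (Fin n) ℝ) : specNorm M = ‖M‖ := rfl

theorem lyapunov_rhs_eq_of_stationary {n R : ℕ} {A : Matrix (Fin n) (Fin n) ℝ}
    {B : Matrix (Fin n) (Fin R) ℝ} {Vstar : Matrix (Fin n) (Fin n) ℝ}
    (hVstar : A * Vstar + Vstar * Aᵀ + B * Bᵀ = 0) (V : Matrix (Fin n) (Fin n) ℝ) :
    A * V + V * Aᵀ + B * Bᵀ = A * (V - Vstar) + (V - Vstar) * Aᵀ := by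
  rw [mul_sub, sub_mul, ← sub_eq_zero, ← hVstar]
  abel

/-- If `V` solves the Lyapunov differential equation
`V'(t) = A V(t) + V(t) Aᵀ + B Bᵀ` for all `t ≥ 0` and `V*` is a stationary solution, then
`‖V(t) - V*‖₂ ≤ ‖exp(tA)‖₂² ‖V(0) - V*‖₂` for all `t ≥ 0`. -/
theorem lyapunov_ode_norm_estimate (n R : ℕ)
    (A : Matrix (Fin n) (Fin n) ℝ) (B : Matrix (Fin n) (Fin R) ℝ)
    (V : ℝ → Matrix (Fin n) (Fin n) ℝ) (Vstar : Matrix (Fin n) (Fin n) ℝ)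
    (hV : ∀ t : ℝ, 0 ≤ t → ∀ i j,
      HasDerivAt (fun s : ℝ => V s i j) ((A * V t + V t * Aᵀ + B * Bᵀ) i j) t)
    (hVstar : A * Vstar + Vstar * Aᵀ + B * Bᵀ = 0) :
    ∀ t : ℝ, 0 ≤ t →
      specNorm (V t - Vstar) ≤ specNorm (NormedSpace.exp (t • A)) ^ 2 * specNorm (V 0 - Vstar) := by
  intro t ht
  have hW : ∀ s ∈ Icc 0 t, HasDerivAt (fun s => V s - Vstar)
      (A * (V s - Vstar) + (V s - Vstar) * Aᵀ) s := fun s hs => by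
    rw [← lyapunov_rhs_eq_of_stationary hVstar]
    exact (hasDerivAt_of_hasDerivAt_entries (hV s hs.1)).sub_const Vstar
  have hsol := eq_exp_smul_mul_mul_exp_smul_of_hasDerivAt ht hW
  rw [← transpose_smul, exp_transpose] at hsol
  simp only [specNorm_eq_l2_opNorm, hsol]
  calc ‖exp (t • A) * (V 0 - Vstar) * (exp (t • A))ᵀ‖
      ≤ ‖exp (t • A)‖ * ‖V 0 - Vstar‖ * ‖(exp (t • A))ᵀ‖ := norm_mul₃_le
    _ = ‖exp (t • A)‖ ^ 2 * ‖V 0 - Vstar‖ := by rw [l2_opNorm_transpose]; ring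
end

section
/- Let n, R ∈ ℕ, let A be a complex n×n matrix, let B be a complex n×R matrix, and let α ∈ ℂ with Re(α) < 0 such that A + αI is invertible. Define the Cayley factor C(α) := (A + αI)⁻¹ · (A − conj(α)·I) and B(α) := √(−2·Re(α)) · (A + αI)⁻¹ · B. Then for every complex n×n matrix X, the Lyapunov equation A·X + X·Aᴴ + B·Bᴴ = 0 holds if and only if the Stein equation X = C(α)·X·C(α)ᴴ + B(α)·B(α)ᴴ holds. -/
open Matrix

/-- For a shift `α` with `Re α < 0` such that `A + αI` is invertible, the
Lyapunov equation `A X + X Aᴴ + B Bᴴ = 0` is equivalent to the Stein equation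
`X = C(α) X C(α)ᴴ + B(α) B(α)ᴴ`, where `C(α) = (A + αI)⁻¹ (A - conj(α) I)` and
`B(α) = √(-2 Re α) (A + αI)⁻¹ B`. -/
theorem lyapunov_iff_stein (n R : ℕ)
    (A : Matrix (Fin n) (Fin n) ℂ) (B : Matrix (Fin n) (Fin R) ℂ)
    (α : ℂ) (hα : α.re < 0) (hinv : IsUnit (A + α • (1 : Matrix (Fin n) (Fin n) ℂ)))
    (C : Matrix (Fin n) (Fin n) ℂ)
    (hC : C = (A + α • 1)⁻¹ * (A - (starRingEnd ℂ α) • 1))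
    (Bα : Matrix (Fin n) (Fin R) ℂ)
    (hBα : Bα = (Real.sqrt (-2 * α.re) : ℂ) • ((A + α • 1)⁻¹ * B)) :
    ∀ X : Matrix (Fin n) (Fin n) ℂ,
      A * X + X * Aᴴ + B * Bᴴ = 0 ↔ X = C * X * Cᴴ + Bα * Bαᴴ := by
  intro X
  set c : ℂ := (starRingEnd ℂ) α with hc
  set M : Matrix (Fin n) (Fin n) ℂ := A + α • 1 with hM
  have hdet : IsUnit M.det := (Matrix.isUnit_iff_isUnit_det M).mp hinv
  have h1 : M⁻¹ * M = 1 := Matrix.nonsing_inv_mul M hdet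
  have h2' : M * M⁻¹ = 1 := Matrix.mul_nonsing_inv M hdet
  have h3 : Mᴴ * (M⁻¹)ᴴ = 1 := by
    rw [← Matrix.conjTranspose_mul, h1, Matrix.conjTranspose_one]
  have h4 : (M⁻¹)ᴴ * Mᴴ = 1 := by
    rw [← Matrix.conjTranspose_mul, h2', Matrix.conjTranspose_one]
  have key : ∀ Y : Matrix (Fin n) (Fin n) ℂ,
      X = M⁻¹ * Y * (M⁻¹)ᴴ ↔ M * X * Mᴴ = Y := by
    intro Y
    constructor
    · rintro rfl
      calc M * (M⁻¹ * Y * (M⁻¹)ᴴ) * Mᴴ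
          = (M * M⁻¹) * Y * ((M⁻¹)ᴴ * Mᴴ) := by noncomm_ring
        _ = Y := by rw [h2', h4, one_mul, mul_one]
    · rintro rfl
      symm
      calc M⁻¹ * (M * X * Mᴴ) * (M⁻¹)ᴴ
          = (M⁻¹ * M) * X * (Mᴴ * (M⁻¹)ᴴ) := by noncomm_ring
        _ = X := by rw [h1, h3, one_mul, mul_one]
  have hr : ((Real.sqrt (-2 * α.re) : ℂ)) * (starRingEnd ℂ) ((Real.sqrt (-2 * α.re) : ℂ))
      = ((-2 * α.re : ℝ) : ℂ) := by
    rw [Complex.conj_ofReal, ← Complex.ofReal_mul,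
      Real.mul_self_sqrt (by linarith : (0:ℝ) ≤ -2 * α.re)]
  have hCX : C * X * Cᴴ = M⁻¹ * ((A - c • 1) * X * (A - c • 1)ᴴ) * (M⁻¹)ᴴ := by
    rw [hC, Matrix.conjTranspose_mul]
    noncomm_ring
  have hr' : ((Real.sqrt (-2 * α.re) : ℂ)) * star ((Real.sqrt (-2 * α.re) : ℂ))
      = ((-2 * α.re : ℝ) : ℂ) := hr
  have hBB : Bα * Bαᴴ = ((-2 * α.re : ℝ) : ℂ) • (M⁻¹ * (B * Bᴴ) * (M⁻¹)ᴴ) := by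
    rw [hBα, Matrix.conjTranspose_smul, Matrix.conjTranspose_mul, Matrix.smul_mul,
      Matrix.mul_smul, smul_smul, hr']
    congr 1
    rw [Matrix.mul_assoc, Matrix.mul_assoc]
    congr 1
    rw [Matrix.mul_assoc]
  have hRHS : C * X * Cᴴ + Bα * Bαᴴ
      = M⁻¹ * ((A - c • 1) * X * (A - c • 1)ᴴ + ((-2 * α.re : ℝ) : ℂ) • (B * Bᴴ)) * (M⁻¹)ᴴ := by
    rw [hCX, hBB, Matrix.mul_add, Matrix.add_mul, mul_smul_comm, smul_mul_assoc]
  rw [hRHS, key]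
  have hcval : c = 2 * (α.re : ℂ) - α := by
    rw [hc, eq_sub_iff_add_eq, add_comm, Complex.add_conj]
    push_cast
    ring
  have hMH : Mᴴ = Aᴴ + c • 1 := by
    simp [hM, hc]
  have hAcH : (A - c • 1)ᴴ = Aᴴ - α • 1 := by
    simp [hc]
  have hcoef : ((-2 * α.re : ℝ) : ℂ) = -(2 * (α.re : ℂ)) := by push_cast; ring
  have expand : M * X * Mᴴ - (A - c • 1) * X * (A - c • 1)ᴴ
      = (2 * (α.re : ℂ)) • (A * X + X * Aᴴ) := by
    rw [hM, hMH, hAcH, hcval]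
    simp only [Matrix.add_mul, Matrix.mul_add, Matrix.sub_mul, Matrix.mul_sub,
      smul_mul_assoc, mul_smul_comm, smul_smul, smul_add, smul_sub, mul_one, one_mul]
    module
  have hne : (2 * (α.re : ℂ)) ≠ 0 := by
    simp only [ne_eq, mul_eq_zero, Complex.ofReal_eq_zero]
    push_neg
    constructor
    · norm_num
    · linarith
  constructor
  · intro hLyap
    have hE := eq_add_of_sub_eq expand
    have hneg : A * X + X * Aᴴ = -(B * Bᴴ) := eq_neg_of_add_eq_zero_left hLyap
    rw [hE, hneg, hcoef, neg_smul, ← smul_neg]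
    abel
  · intro hStein
    have h : (2 * (α.re : ℂ)) • (A * X + X * Aᴴ) = ((-2 * α.re : ℝ) : ℂ) • (B * Bᴴ) := by
      rw [← expand, hStein]
      abel
    rw [hcoef, neg_smul] at h
    have h2 : (2 * (α.re : ℂ)) • (A * X + X * Aᴴ + B * Bᴴ) = 0 := by
      rw [smul_add, h]
      abel
    rcases smul_eq_zero.mp h2 with h0 | h0
    · exact absurd h0 hne
    · exact h0
end

section
/- Let n, R ∈ ℕ, let A be a complex n×n matrix and B a complex n×R matrix. Let α₁, …, α_j ∈ ℂ with Re(αᵢ) < 0 and A + αᵢI invertible for every i. Define the Cayley factors Cᵢ := (A + αᵢI)⁻¹ · (A − conj(αᵢ)·I) and Bᵢ := √(−2·Re(αᵢ)) · (A + αᵢI)⁻¹ · B, and the ADI iterates X₀ := 0, Xᵢ := Cᵢ·Xᵢ₋₁·Cᵢᴴ + Bᵢ·Bᵢᴴ for 1 ≤ i ≤ j. Suppose V* is a solution of A·V* + V*·Aᴴ + B·Bᴴ = 0. Then V* − X_j = J_j · V* · J_jᴴ, where J_j := C_j · C_{j−1} ⋯ C₁. -/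
open Matrix

lemma adi_key {n R : ℕ} (A : Matrix (Fin n) (Fin n) ℂ) (B : Matrix (Fin n) (Fin R) ℂ)
    (a : ℂ) (ha : a.re < 0) (hM : IsUnit (A + a • (1 : Matrix (Fin n) (Fin n) ℂ)))
    (V : Matrix (Fin n) (Fin n) ℂ) (hV : A * V + V * Aᴴ + B * Bᴴ = 0) :
    V - ((A + a • 1)⁻¹ * (A - (starRingEnd ℂ a) • 1)) * V *
        ((A + a • 1)⁻¹ * (A - (starRingEnd ℂ a) • 1))ᴴ
      = ((Real.sqrt (-2 * a.re) : ℂ) • ((A + a • 1)⁻¹ * B)) *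
        ((Real.sqrt (-2 * a.re) : ℂ) • ((A + a • 1)⁻¹ * B))ᴴ := by
  set M : Matrix (Fin n) (Fin n) ℂ := A + a • 1 with hMdef
  set N : Matrix (Fin n) (Fin n) ℂ := A - (starRingEnd ℂ a) • 1 with hNdef
  have hMdet : IsUnit M.det := (Matrix.isUnit_iff_isUnit_det M).mp hM
  have hMHdet : IsUnit Mᴴ.det := (Matrix.isUnit_iff_isUnit_det _).mp
    ((Matrix.isUnit_conjTranspose M).mpr hM)
  have hl : M⁻¹ * M = 1 := Matrix.nonsing_inv_mul M hMdet
  have hrH : Mᴴ * (Mᴴ)⁻¹ = 1 := Matrix.mul_nonsing_inv _ hMHdet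
  have hcancel : ∀ X Y : Matrix (Fin n) (Fin n) ℂ, M * X * Mᴴ = M * Y * Mᴴ → X = Y := by
    intro X Y h
    have e : ∀ Z : Matrix (Fin n) (Fin n) ℂ, M⁻¹ * (M * Z * Mᴴ) * (Mᴴ)⁻¹ = Z := by
      intro Z
      rw [← Matrix.mul_assoc, ← Matrix.mul_assoc, hl, Matrix.one_mul, Matrix.mul_assoc,
        hrH, Matrix.mul_one]
    rw [← e X, ← e Y, h]
  have hBB : A * V + V * Aᴴ = -(B * Bᴴ) := eq_neg_of_add_eq_zero_left hV
  have hs : ((Real.sqrt (-2 * a.re) : ℂ)) * (starRingEnd ℂ (Real.sqrt (-2 * a.re) : ℂ))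
      = ((-2 * a.re : ℝ) : ℂ) := by
    rw [Complex.conj_ofReal, ← Complex.ofReal_mul,
      Real.mul_self_sqrt (by nlinarith : (0:ℝ) ≤ -2 * a.re)]
  apply hcancel
  have key1 : M * ((M⁻¹ * N) * V * (M⁻¹ * N)ᴴ) * Mᴴ = N * V * Nᴴ := by
    rw [conjTranspose_mul, Matrix.conjTranspose_nonsing_inv]
    simp only [Matrix.mul_assoc]
    rw [Matrix.nonsing_inv_mul _ hMHdet, Matrix.mul_one,
      Matrix.mul_nonsing_inv_cancel_left _ _ hMdet]
  have hs' : ((Real.sqrt (-2 * a.re) : ℂ)) * star ((Real.sqrt (-2 * a.re) : ℂ))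
      = ((-2 * a.re : ℝ) : ℂ) := hs
  have e : (((Real.sqrt (-2 * a.re) : ℂ)) • (M⁻¹ * B)) *
      (((Real.sqrt (-2 * a.re) : ℂ)) • (M⁻¹ * B))ᴴ
      = (((Real.sqrt (-2 * a.re) : ℂ)) * star ((Real.sqrt (-2 * a.re) : ℂ))) •
        ((M⁻¹ * B) * (M⁻¹ * B)ᴴ) := by
    rw [conjTranspose_smul, Matrix.smul_mul, Matrix.mul_smul, smul_smul]
  have key2 : M * (((Real.sqrt (-2 * a.re) : ℂ) • (M⁻¹ * B)) *
      ((Real.sqrt (-2 * a.re) : ℂ) • (M⁻¹ * B))ᴴ) * Mᴴ = ((-2 * a.re : ℝ) : ℂ) • (B * Bᴴ) := by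
    rw [e, Matrix.mul_smul, Matrix.smul_mul, hs']
    congr 1
    rw [conjTranspose_mul, Matrix.conjTranspose_nonsing_inv]
    simp only [Matrix.mul_assoc]
    rw [Matrix.nonsing_inv_mul _ hMHdet, Matrix.mul_one,
      Matrix.mul_nonsing_inv_cancel_left _ _ hMdet]
  rw [Matrix.mul_sub, Matrix.sub_mul, key1, key2]
  have hMH : Mᴴ = Aᴴ + (starRingEnd ℂ a) • 1 := by
    simp [hMdef]
  have hNH : Nᴴ = Aᴴ - a • 1 := by
    simp [hNdef]
  have hstep : ((-2 * a.re : ℝ) : ℂ) • (B * Bᴴ)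
      = (a + starRingEnd ℂ a) • (A * V + V * Aᴴ) := by
    rw [hBB, Complex.add_conj]
    push_cast
    module
  rw [hMH, hNH, hNdef, hMdef, hstep]
  simp only [Matrix.add_mul, Matrix.mul_add, Matrix.sub_mul, Matrix.mul_sub,
    Matrix.smul_mul, Matrix.mul_smul, Matrix.one_mul, Matrix.mul_one, smul_smul,
    Matrix.mul_assoc]
  module

/-- ADI error formula: if `X₀ = 0`, `Xᵢ = Cᵢ Xᵢ₋₁ Cᵢᴴ + Bᵢ Bᵢᴴ` are the ADI
iterates for shifts `α₁, …, α_j` with `Re αᵢ < 0` and `A + αᵢ I` invertible, and `V*` solves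
the Lyapunov equation `A V* + V* Aᴴ + B Bᴴ = 0`, then `V* − X_j = J_j V* J_jᴴ` with
`J_j = C_j C_{j-1} ⋯ C₁`. -/
theorem adi_error_formula (n R j : ℕ)
    (A : Matrix (Fin n) (Fin n) ℂ) (B : Matrix (Fin n) (Fin R) ℂ)
    (α : ℕ → ℂ)
    (hα : ∀ i, 1 ≤ i → i ≤ j → (α i).re < 0)
    (hinv : ∀ i, 1 ≤ i → i ≤ j → IsUnit (A + α i • (1 : Matrix (Fin n) (Fin n) ℂ)))
    (C : ℕ → Matrix (Fin n) (Fin n) ℂ)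
    (hC : ∀ i, C i = (A + α i • 1)⁻¹ * (A - (starRingEnd ℂ (α i)) • 1))
    (Bm : ℕ → Matrix (Fin n) (Fin R) ℂ)
    (hBm : ∀ i, Bm i = (Real.sqrt (-2 * (α i).re) : ℂ) • ((A + α i • 1)⁻¹ * B))
    (X : ℕ → Matrix (Fin n) (Fin n) ℂ)
    (hX0 : X 0 = 0)
    (hX : ∀ i, 1 ≤ i → i ≤ j → X i = C i * X (i - 1) * (C i)ᴴ + Bm i * (Bm i)ᴴ)
    (J : ℕ → Matrix (Fin n) (Fin n) ℂ)
    (hJ0 : J 0 = 1)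
    (hJ : ∀ i, i < j → J (i + 1) = C (i + 1) * J i)
    (Vstar : Matrix (Fin n) (Fin n) ℂ)
    (hVstar : A * Vstar + Vstar * Aᴴ + B * Bᴴ = 0) :
    Vstar - X j = J j * Vstar * (J j)ᴴ := by
  suffices h : ∀ i, i ≤ j → Vstar - X i = J i * Vstar * (J i)ᴴ from h j le_rfl
  intro i
  induction i with
  | zero => intro _; simp [hX0, hJ0]
  | succ k ih =>
    intro hk
    have hk' : k ≤ j := Nat.le_of_succ_le hk
    have h1 : 1 ≤ k + 1 := Nat.le_add_left 1 k
    have key := adi_key A B (α (k+1)) (hα (k+1) h1 hk) (hinv (k+1) h1 hk) Vstar hVstar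
    rw [← hC (k+1), ← hBm (k+1)] at key
    have hXk := hX (k+1) h1 hk
    simp only [Nat.add_sub_cancel] at hXk
    rw [hXk, hJ k (Nat.lt_of_succ_le hk)]
    have : Vstar - (C (k+1) * X k * (C (k+1))ᴴ + Bm (k+1) * (Bm (k+1))ᴴ)
        = (Vstar - C (k+1) * Vstar * (C (k+1))ᴴ - Bm (k+1) * (Bm (k+1))ᴴ)
          + C (k+1) * (Vstar - X k) * (C (k+1))ᴴ := by
      rw [Matrix.mul_sub, Matrix.sub_mul]
      abel
    rw [this, key, sub_self, zero_add, ih hk',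
      conjTranspose_mul]
    simp only [Matrix.mul_assoc]
end

section
/- Let n, R ∈ ℕ and let A be a complex n×n matrix that is diagonalizable, A = S·D·S⁻¹ with D diagonal, and B a complex n×R matrix. Let α₁, …, α_j ∈ ℂ with Re(αᵢ) < 0 and A + αᵢI invertible for each i, define the ADI iterates X₀ := 0, Xᵢ := Cᵢ·Xᵢ₋₁·Cᵢᴴ + Bᵢ·Bᵢᴴ with Cᵢ := (A + αᵢI)⁻¹·(A − conj(αᵢ)I) and Bᵢ := √(−2Re(αᵢ))·(A + αᵢI)⁻¹·B, and let V* solve A·V* + V*·Aᴴ + B·Bᴴ = 0. Then ‖X_j − V*‖₂ ≤ (‖S‖₂·‖S⁻¹‖₂)² · ‖V*‖₂ · Θ_j², where Θ_j := ∏_{i=1}^{j} max over diagonal entries z of D of |z − conj(αᵢ)| / |z + αᵢ|. -/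
/-!
The Lyapunov equation `A V + V Aᴴ + B Bᴴ = 0` is equivalent to
`(A + αI) V (A + αI)ᴴ = (A - ᾱI) V (A - ᾱI)ᴴ - 2 Re α · B Bᴴ` for every shift `α`, so `V*` is a
fixed point of each ADI step. The steps are affine with linear part `Y ↦ Cᵢ Y Cᵢᴴ`, hence
`X_j - V* = -P V* Pᴴ` with `P = C_j ⋯ C₁`. Conjugation by `S` turns every `Cᵢ` into the diagonal
matrix with entries `(z - ᾱᵢ) / (z + αᵢ)`, so `‖P‖₂ ≤ κ(S) Θ_j`.
-/

open Matrix

/-- The spectral norm (`2`-norm) of a complex square matrix: its operator norm as a linear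
map between Euclidean (`ℓ²`) spaces. -/
noncomputable def specNormC {n : ℕ} (M : Matrix (Fin n) (Fin n) ℂ) : ℝ :=
  ‖Matrix.toEuclideanCLM (𝕜 := ℂ) M‖

open scoped Matrix.Norms.L2Operator

theorem specNormC_eq_norm {n : ℕ} (M : Matrix (Fin n) (Fin n) ℂ) : specNormC M = ‖M‖ := rfl

theorem norm_mul_mul_star_le {M : Type*} [NonUnitalSeminormedRing M] [StarRing M]
    [NormedStarGroup M] (a b : M) : ‖a * b * star a‖ ≤ ‖a‖ ^ 2 * ‖b‖ :=
  calc ‖a * b * star a‖ ≤ ‖a‖ * ‖b‖ * ‖star a‖ := norm_mul₃_le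
    _ = ‖a‖ ^ 2 * ‖b‖ := by rw [norm_star]; ring

theorem Matrix.l2_opNorm_one_le {m 𝕜 : Type*} [Fintype m] [DecidableEq m] [RCLike 𝕜] :
    ‖(1 : Matrix m m 𝕜)‖ ≤ 1 := by
  rw [← diagonal_one, l2_opNorm_diagonal]
  exact pi_norm_le_iff_of_nonneg zero_le_one |>.mpr fun _ => by simp

theorem Matrix.l2_opNorm_diagonal_le_iSup {m 𝕜 : Type*} [Fintype m] [DecidableEq m] [RCLike 𝕜]
    (v : m → 𝕜) : ‖diagonal v‖ ≤ ⨆ k, ‖v k‖ := by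
  rw [l2_opNorm_diagonal]
  exact (pi_norm_le_iff_of_nonneg (Real.iSup_nonneg fun _ => norm_nonneg _)).mpr
    fun k => le_ciSup (f := fun k => ‖v k‖) (Finite.bddAbove_range _) k

theorem ofReal_sqrt_smul_mul_conjTranspose_self {m r : Type*} [Fintype r] (X : Matrix m r ℂ)
    {t : ℝ} (ht : 0 ≤ t) :
    ((√t : ℂ) • X) * ((√t : ℂ) • X)ᴴ = (t : ℂ) • (X * Xᴴ) := by
  rw [conjTranspose_smul, Matrix.smul_mul, Matrix.mul_smul, smul_smul, Complex.star_def,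
    Complex.conj_ofReal, ← Complex.ofReal_mul, Real.mul_self_sqrt ht]

section Lyapunov

variable {m r : Type*} [Fintype m] [DecidableEq m] [Fintype r]

theorem shift_mul_mul_conjTranspose_of_lyapunov {A V : Matrix m m ℂ} {B : Matrix m r ℂ}
    (hV : A * V + V * Aᴴ + B * Bᴴ = 0) (a : ℂ) :
    (A + a • 1) * V * (A + a • 1)ᴴ
      = (A - starRingEnd ℂ a • 1) * V * (A - starRingEnd ℂ a • 1)ᴴ
        + ((-2 * a.re : ℝ) : ℂ) • (B * Bᴴ) := by
  have hBB : B * Bᴴ = -(A * V) - V * Aᴴ := by linear_combination (norm := abel) hV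
  have hre : ((-2 * a.re : ℝ) : ℂ) = -(a + starRingEnd ℂ a) := by
    rw [Complex.add_conj]; push_cast; ring
  rw [hBB, hre]
  simp only [conjTranspose_add, conjTranspose_sub, conjTranspose_smul, conjTranspose_one,
    Matrix.add_mul, Matrix.mul_add, Matrix.sub_mul, Matrix.mul_sub, smul_mul_assoc,
    mul_smul_comm, Matrix.one_mul, Matrix.mul_one, Complex.star_def, Complex.conj_conj]
  module

theorem adi_step_fixes_lyapunov_solution {A V : Matrix m m ℂ} {B : Matrix m r ℂ}
    (hV : A * V + V * Aᴴ + B * Bᴴ = 0) {a : ℂ} (ha : a.re ≤ 0) (hA : IsUnit (A + a • 1)) :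
    ((A + a • 1)⁻¹ * (A - starRingEnd ℂ a • 1)) * V * ((A + a • 1)⁻¹ * (A - starRingEnd ℂ a • 1))ᴴ
      + ((√(-2 * a.re) : ℂ) • ((A + a • 1)⁻¹ * B)) * ((√(-2 * a.re) : ℂ) • ((A + a • 1)⁻¹ * B))ᴴ
      = V := by
  set M := A + a • 1
  set N := A - starRingEnd ℂ a • 1
  have hM : M⁻¹ * M = 1 := nonsing_inv_mul M ((isUnit_iff_isUnit_det M).mp hA)
  rw [ofReal_sqrt_smul_mul_conjTranspose_self _ (by linarith)]
  calc M⁻¹ * N * V * (M⁻¹ * N)ᴴ + ((-2 * a.re : ℝ) : ℂ) • (M⁻¹ * B * (M⁻¹ * B)ᴴ)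
      = M⁻¹ * (N * V * Nᴴ + ((-2 * a.re : ℝ) : ℂ) • (B * Bᴴ)) * M⁻¹ᴴ := by
        simp only [conjTranspose_mul, Matrix.mul_add, Matrix.add_mul, mul_smul_comm,
          smul_mul_assoc, Matrix.mul_assoc]
    _ = (M⁻¹ * M) * V * (M⁻¹ * M)ᴴ := by
        rw [← shift_mul_mul_conjTranspose_of_lyapunov hV a, conjTranspose_mul]
        simp only [Matrix.mul_assoc]
        rfl
    _ = V := by rw [hM, conjTranspose_one, Matrix.one_mul, Matrix.mul_one]

end Lyapunov

/-- `orderedProd f i = f i * ⋯ * f 1`; the factor `f 0` never occurs. -/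
def orderedProd {M : Type*} [Monoid M] (f : ℕ → M) : ℕ → M
  | 0 => 1
  | i + 1 => f (i + 1) * orderedProd f i

section OrderedProd

variable {M : Type*}

theorem orderedProd_conj [Monoid M] {f g : ℕ → M} {S T : M} (hST : S * T = 1) (hTS : T * S = 1)
    {i : ℕ} (h : ∀ l, 1 ≤ l → l ≤ i → f l = S * g l * T) :
    orderedProd f i = S * orderedProd g i * T := by
  induction i with
  | zero => simp [orderedProd, hST]
  | succ i ih =>
    rw [orderedProd, orderedProd, ih fun l h1 h2 => h l h1 (h2.trans i.le_succ),
      h (i + 1) (Nat.le_add_left 1 i) le_rfl]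
    simp only [mul_assoc]
    rw [← mul_assoc T S, hTS, one_mul]

theorem norm_orderedProd_le [SeminormedRing M] (h1 : ‖(1 : M)‖ ≤ 1) (f : ℕ → M) (i : ℕ) :
    ‖orderedProd f i‖ ≤ ∏ l ∈ Finset.Icc 1 i, ‖f l‖ := by
  induction i with
  | zero => simpa [orderedProd] using h1
  | succ i ih =>
    rw [orderedProd, Finset.prod_Icc_succ_top (Nat.le_add_left 1 i), mul_comm]
    exact (norm_mul_le _ _).trans (by gcongr)

theorem sub_eq_orderedProd_mul_mul_star [Ring M] [StarRing M] {C Q X : ℕ → M} {V : M} {j : ℕ}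
    (hX : ∀ i, 1 ≤ i → i ≤ j → X i = C i * X (i - 1) * star (C i) + Q i)
    (hV : ∀ i, 1 ≤ i → i ≤ j → V = C i * V * star (C i) + Q i) :
    X j - V = orderedProd C j * (X 0 - V) * star (orderedProd C j) := by
  induction j with
  | zero => simp [orderedProd]
  | succ j ih =>
    have step : X (j + 1) - V = C (j + 1) * (X j - V) * star (C (j + 1)) := by
      calc X (j + 1) - V
          = (C (j + 1) * X j * star (C (j + 1)) + Q (j + 1))
            - (C (j + 1) * V * star (C (j + 1)) + Q (j + 1)) := by
            rw [← hV (j + 1) (Nat.le_add_left 1 j) le_rfl, hX (j + 1) (Nat.le_add_left 1 j) le_rfl,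
              Nat.add_sub_cancel]
        _ = C (j + 1) * (X j - V) * star (C (j + 1)) := by noncomm_ring
    rw [step, ih (fun i h1 h2 => hX i h1 (h2.trans j.le_succ))
      (fun i h1 h2 => hV i h1 (h2.trans j.le_succ)), orderedProd, star_mul]
    simp only [mul_assoc]

end OrderedProd

section Diagonalizable

variable {m K : Type*} [Fintype m] [DecidableEq m] [Field K]

theorem conj_add_smul_one {S : Matrix m m K} (hS : IsUnit S) (D : Matrix m m K) (c : K) :
    S * D * S⁻¹ + c • 1 = S * (D + c • 1) * S⁻¹ := by
  rw [Matrix.mul_add, Matrix.add_mul, Matrix.mul_smul, Matrix.smul_mul, Matrix.mul_one,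
    mul_nonsing_inv S ((isUnit_iff_isUnit_det S).mp hS)]

theorem inv_add_smul_one_mul_sub_smul_one_eq_conj_diagonal {A S D : Matrix m m K} (hS : IsUnit S)
    (hD : D.IsDiag) (hA : A = S * D * S⁻¹) {a : K} (ha : IsUnit (A + a • 1)) (b : K) :
    (A + a • 1)⁻¹ * (A - b • 1) = S * diagonal (fun k => (D k k - b) / (D k k + a)) * S⁻¹ := by
  obtain ⟨d, rfl⟩ : ∃ d, D = diagonal d := ⟨D.diag, hD.diagonal_diag.symm⟩
  simp only [diagonal_apply_eq]
  have hshift : ∀ c, A + c • 1 = S * diagonal (fun k => d k + c) * S⁻¹ := fun c => by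
    rw [hA, conj_add_smul_one hS, smul_one_eq_diagonal, diagonal_add]
  have hdet := (isUnit_iff_isUnit_det _).mp ha
  have hne : ∀ k, d k + a ≠ 0 := by
    rw [hshift, det_conj hS, det_diagonal] at hdet
    exact fun k => Finset.prod_ne_zero_iff.mp hdet.ne_zero k (Finset.mem_univ k)
  suffices A - b • 1 = (A + a • 1) * (S * diagonal (fun k => (d k - b) / (d k + a)) * S⁻¹) by
    rw [this, nonsing_inv_mul_cancel_left _ _ hdet]
  rw [sub_eq_add_neg, ← neg_smul, hshift, hshift]
  simp only [Matrix.mul_assoc, nonsing_inv_mul_cancel_left _ _ ((isUnit_iff_isUnit_det S).mp hS)]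
  rw [← Matrix.mul_assoc (diagonal _), diagonal_mul_diagonal]
  congr 3 with k
  rw [mul_div_cancel₀ _ (hne k), sub_eq_add_neg]

end Diagonalizable

/-- General ADI error bound: for diagonalizable `A = S D S⁻¹` (`D` diagonal),
shifts `αᵢ` with `Re αᵢ < 0` and `A + αᵢ I` invertible, the ADI iterates `X₀ = 0`,
`Xᵢ = Cᵢ Xᵢ₋₁ Cᵢᴴ + Bᵢ Bᵢᴴ` and the Lyapunov solution `V*` satisfy
`‖X_j − V*‖₂ ≤ (‖S‖₂ ‖S⁻¹‖₂)² ‖V*‖₂ Θ_j²` with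
`Θ_j = ∏ᵢ max_z |z − conj αᵢ| / |z + αᵢ|` over the diagonal entries `z` of `D`. -/
theorem adi_error_bound_diagonalizable (n R j : ℕ)
    (A S D : Matrix (Fin n) (Fin n) ℂ)
    (hS : IsUnit S) (hD : D.IsDiag) (hAS : A = S * D * S⁻¹)
    (B : Matrix (Fin n) (Fin R) ℂ)
    (α : ℕ → ℂ)
    (hα : ∀ i, 1 ≤ i → i ≤ j → (α i).re < 0)
    (hinv : ∀ i, 1 ≤ i → i ≤ j → IsUnit (A + α i • (1 : Matrix (Fin n) (Fin n) ℂ)))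
    (C : ℕ → Matrix (Fin n) (Fin n) ℂ)
    (hC : ∀ i, C i = (A + α i • 1)⁻¹ * (A - (starRingEnd ℂ (α i)) • 1))
    (Bm : ℕ → Matrix (Fin n) (Fin R) ℂ)
    (hBm : ∀ i, Bm i = (Real.sqrt (-2 * (α i).re) : ℂ) • ((A + α i • 1)⁻¹ * B))
    (X : ℕ → Matrix (Fin n) (Fin n) ℂ)
    (hX0 : X 0 = 0)
    (hX : ∀ i, 1 ≤ i → i ≤ j → X i = C i * X (i - 1) * (C i)ᴴ + Bm i * (Bm i)ᴴ)
    (Vstar : Matrix (Fin n) (Fin n) ℂ)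
    (hVstar : A * Vstar + Vstar * Aᴴ + B * Bᴴ = 0)
    (Θ : ℝ)
    (hΘ : Θ = ∏ i ∈ Finset.Icc 1 j,
      ⨆ k : Fin n, ‖D k k - starRingEnd ℂ (α i)‖ / ‖D k k + α i‖) :
    specNormC (X j - Vstar) ≤ (specNormC S * specNormC S⁻¹) ^ 2 * specNormC Vstar * Θ ^ 2 := by
  simp only [specNormC_eq_norm]
  have hSd := (isUnit_iff_isUnit_det S).mp hS
  set θ : ℕ → ℝ := fun i => ⨆ k : Fin n, ‖D k k - starRingEnd ℂ (α i)‖ / ‖D k k + α i‖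
  set E : ℕ → Matrix (Fin n) (Fin n) ℂ :=
    fun i => diagonal fun k => (D k k - starRingEnd ℂ (α i)) / (D k k + α i)
  have hE : ∀ i, ‖E i‖ ≤ θ i := fun i =>
    (l2_opNorm_diagonal_le_iSup _).trans_eq (by simp only [θ, norm_div])
  have herr : X j - Vstar = orderedProd C j * (-Vstar) * star (orderedProd C j) := by
    simpa only [hX0, zero_sub] using sub_eq_orderedProd_mul_mul_star hX fun i h1 h2 => by
      rw [hC, hBm]
      exact (adi_step_fixes_lyapunov_solution hVstar (hα i h1 h2).le (hinv i h1 h2)).symm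
  have hP : ‖orderedProd C j‖ ≤ ‖S‖ * ‖S⁻¹‖ * Θ := by
    rw [orderedProd_conj (mul_nonsing_inv S hSd) (nonsing_inv_mul S hSd) fun i h1 h2 =>
      (hC i).trans (inv_add_smul_one_mul_sub_smul_one_eq_conj_diagonal hS hD hAS (hinv i h1 h2) _)]
    calc ‖S * orderedProd E j * S⁻¹‖ ≤ ‖S‖ * ‖orderedProd E j‖ * ‖S⁻¹‖ := norm_mul₃_le
      _ ≤ ‖S‖ * Θ * ‖S⁻¹‖ := by
        gcongr
        rw [hΘ]
        exact (norm_orderedProd_le l2_opNorm_one_le E j).trans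
          (Finset.prod_le_prod (fun i _ => norm_nonneg _) fun i _ => hE i)
      _ = ‖S‖ * ‖S⁻¹‖ * Θ := by ring
  calc ‖X j - Vstar‖ ≤ ‖orderedProd C j‖ ^ 2 * ‖Vstar‖ := by
        simpa only [herr, norm_neg] using norm_mul_mul_star_le (orderedProd C j) (-Vstar)
    _ ≤ (‖S‖ * ‖S⁻¹‖ * Θ) ^ 2 * ‖Vstar‖ := by gcongr
    _ = (‖S‖ * ‖S⁻¹‖) ^ 2 * ‖Vstar‖ * Θ ^ 2 := by ring
end

section
/- Let n ∈ ℕ and let A be a complex n×n matrix all of whose eigenvalues have strictly negative real part. Then the Lyapunov operator X ↦ A·X + X·Aᴴ is an injective (hence bijective) linear map on the space of complex n×n matrices; in particular, for every right-hand side Q the stationary Lyapunov equation A·X + X·Aᴴ + Q = 0 has a unique solution. -/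
/-!
If `A X = X B`, then `p(A) X = X p(B)` for every polynomial `p`; taking `p = χ_A`,
Cayley–Hamilton gives `X χ_A(B) = 0`. By the spectral mapping theorem the spectrum of `χ_A(B)`
is `χ_A(σ(B))`, which avoids `0` when `σ(A)` and `σ(B)` are disjoint, so `χ_A(B)` is invertible
and `X = 0`. For a stable `A`, the spectra of `A` and `-Aᴴ` lie in the open left and right
half-planes, so `X ↦ A X + X Aᴴ = A X - X (-Aᴴ)` is injective, hence bijective in finite
dimension.
-/

open Polynomial

namespace Matrix

variable {K : Type*} {m n : Type*} [Fintype m] [DecidableEq m] [Fintype n] [DecidableEq n]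

theorem aeval_mul_eq_mul_aeval [CommRing K] {A : Matrix m m K} {B : Matrix n n K}
    {X : Matrix m n K} (hX : A * X = X * B) (p : K[X]) : aeval A p * X = X * aeval B p := by
  have hpow (k : ℕ) : A ^ k * X = X * B ^ k := by
    induction k with
    | zero => simp
    | succ k ih =>
      rw [pow_succ', Matrix.mul_assoc, ih, ← Matrix.mul_assoc, hX, Matrix.mul_assoc,
        ← pow_succ']
  induction p using Polynomial.induction_on' with
  | add p q hp hq => rw [map_add, map_add, Matrix.add_mul, Matrix.mul_add, hp, hq]
  | monomial k c =>
    rw [aeval_monomial, aeval_monomial, ← Algebra.smul_def, ← Algebra.smul_def, Matrix.smul_mul,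
      Matrix.mul_smul, hpow]

variable [Field K] [IsAlgClosed K]

theorem isUnit_aeval_charpoly_of_disjoint_spectrum [Nonempty m]
    {A : Matrix m m K} {B : Matrix n n K} (h : Disjoint (spectrum K A) (spectrum K B)) :
    IsUnit (aeval B A.charpoly) := by
  have hdeg : 0 < A.charpoly.degree := by
    rw [charpoly_degree_eq_dim]; exact_mod_cast Fintype.card_pos
  rw [← spectrum.zero_notMem_iff K, spectrum.map_polynomial_aeval_of_degree_pos B _ hdeg]
  rintro ⟨r, hrB, hr⟩
  exact h.notMem_of_mem_right hrB (mem_spectrum_of_isRoot_charpoly hr)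

theorem eq_zero_of_mul_eq_mul_of_disjoint_spectrum {A : Matrix m m K}
    {B : Matrix n n K} (h : Disjoint (spectrum K A) (spectrum K B)) {X : Matrix m n K}
    (hX : A * X = X * B) : X = 0 := by
  rcases isEmpty_or_nonempty m with hm | hm
  · exact Subsingleton.elim _ _
  have hunit := (isUnit_aeval_charpoly_of_disjoint_spectrum h).map detMonoidHom
  have hCH := aeval_mul_eq_mul_aeval hX A.charpoly
  rw [aeval_self_charpoly, Matrix.zero_mul] at hCH
  rw [← mul_nonsing_inv_cancel_right _ X hunit, ← hCH, Matrix.zero_mul]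

theorem injective_mul_sub_mul_of_disjoint_spectrum {A : Matrix m m K}
    {B : Matrix n n K} (h : Disjoint (spectrum K A) (spectrum K B)) :
    Function.Injective fun X : Matrix m n K => A * X - X * B := by
  intro X Y hXY
  rw [← sub_eq_zero]
  refine eq_zero_of_mul_eq_mul_of_disjoint_spectrum h ?_
  rw [Matrix.mul_sub, Matrix.sub_mul, sub_eq_sub_iff_sub_eq_sub]
  exact hXY

end Matrix

theorem spectrum.disjoint_neg_star_of_forall_re_neg {A : Type*} [Ring A] [StarRing A]
    [Algebra ℂ A] [StarModule ℂ A] {a : A} (ha : ∀ μ ∈ spectrum ℂ a, μ.re < 0) :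
    Disjoint (spectrum ℂ a) (spectrum ℂ (-star a)) := by
  rw [Set.disjoint_left]
  intro μ hμ hμ'
  rw [← spectrum.neg_eq, Set.mem_neg, spectrum.map_star, Set.mem_star] at hμ'
  have hre := ha _ hμ'
  simp only [Complex.star_def, Complex.conj_re, Complex.neg_re] at hre
  linarith [ha μ hμ]

open Matrix

/-- If all eigenvalues of the complex matrix `A` have strictly negative real
part, then the Lyapunov operator `X ↦ A X + X Aᴴ` is injective; in particular, for every
right-hand side `Q` the stationary Lyapunov equation `A X + X Aᴴ + Q = 0` has a unique
solution. -/
theorem lyapunov_operator_injective_of_stable (n : ℕ)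
    (A : Matrix (Fin n) (Fin n) ℂ)
    (hspec : ∀ μ ∈ spectrum ℂ A, μ.re < 0) :
    Function.Injective (fun X : Matrix (Fin n) (Fin n) ℂ => A * X + X * Aᴴ) ∧
      ∀ Q : Matrix (Fin n) (Fin n) ℂ, ∃! X : Matrix (Fin n) (Fin n) ℂ,
        A * X + X * Aᴴ + Q = 0 := by
  have hinj : Function.Injective fun X : Matrix (Fin n) (Fin n) ℂ => A * X + X * Aᴴ := by
    simpa only [Matrix.mul_neg, sub_neg_eq_add, star_eq_conjTranspose] using
      injective_mul_sub_mul_of_disjoint_spectrum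
        (spectrum.disjoint_neg_star_of_forall_re_neg hspec)
  have hbij : Function.Bijective fun X : Matrix (Fin n) (Fin n) ℂ => A * X + X * Aᴴ :=
    ⟨hinj, LinearMap.injective_iff_surjective
      (f := LinearMap.mulLeft ℂ A + LinearMap.mulRight ℂ Aᴴ) |>.mp hinj⟩
  refine ⟨hinj, fun Q => ?_⟩
  simpa only [add_eq_zero_iff_eq_neg] using hbij.existsUnique (-Q)
end

section
/- Let n ∈ ℕ, let A be a real n×n matrix, and suppose H is a real symmetric positive definite n×n matrix satisfying A·H + H·Aᵀ + 2I = 0. Then for all t ≥ 0, ‖exp(tA)‖₂² ≤ ‖H‖₂·‖H⁻¹‖₂ · e^{−2t/‖H‖₂}. -/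
open Matrix

/-! Write `T` for `A` acting on Euclidean space and `K = H⁻¹`. For self-adjoint `H` the Lyapunov
equation says `⟪T (H v), v⟫ = -‖v‖²`, so along `y(s) = exp(sT) x` the quadratic form
`V(s) = ⟪K y, y⟫` has derivative `-2‖K y‖²`. Since `V = ⟪K y, H (K y)⟫ ≤ ‖H‖ ‖K y‖²`, this is
at most `-(2/‖H‖) V`, and Grönwall gives `V(t) ≤ e^{-2t/‖H‖} V(0) ≤ e^{-2t/‖H‖} ‖K‖ ‖x‖²`.
Finally `‖y‖² ≤ ‖H‖ V(t)`, by Cauchy–Schwarz for the positive form `⟪H ·, ·⟫`. -/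

open NormedSpace
open scoped RealInnerProductSpace

theorem le_mul_exp_of_hasDerivAt_le_mul {f f' : ℝ → ℝ} {k t : ℝ}
    (hf : ∀ s, HasDerivAt f (f' s) s) (hbound : ∀ s, f' s ≤ k * f s) (ht : 0 ≤ t) :
    f t ≤ f 0 * Real.exp (k * t) := by
  have := le_gronwallBound_of_liminf_deriv_right_le (f' := f') (δ := f 0) (ε := 0)
    (fun s _ => (hf s).continuousAt.continuousWithinAt)
    (fun s _ _ hr => (hf s).hasDerivWithinAt.liminf_right_slope_le hr) le_rfl
    (fun s _ => by simpa using hbound s) t ⟨ht, le_rfl⟩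
  simpa [gronwallBound_ε0] using this

namespace ContinuousLinearMap

theorem opNorm_sq_le_of_norm_apply_sq_le {E F : Type*} [SeminormedAddCommGroup E]
    [SeminormedAddCommGroup F] [NormedSpace ℝ E] [NormedSpace ℝ F] {f : E →L[ℝ] F} {c : ℝ}
    (hc : 0 ≤ c) (h : ∀ x, ‖f x‖ ^ 2 ≤ c * ‖x‖ ^ 2) : ‖f‖ ^ 2 ≤ c := by
  have : ‖f‖ ≤ √c := f.opNorm_le_bound (Real.sqrt_nonneg c) fun x => by
    rw [← Real.sqrt_sq (norm_nonneg (f x)), ← Real.sqrt_sq (norm_nonneg x), ← Real.sqrt_mul hc]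
    exact Real.sqrt_le_sqrt (h x)
  calc ‖f‖ ^ 2 ≤ √c ^ 2 := by gcongr
    _ = c := Real.sq_sqrt hc

variable {E : Type*} [NormedAddCommGroup E] [InnerProductSpace ℝ E]

theorem inner_apply_self_le (H : E →L[ℝ] E) (v : E) : ⟪H v, v⟫ ≤ ‖H‖ * ‖v‖ ^ 2 :=
  calc ⟪H v, v⟫ ≤ ‖H v‖ * ‖v‖ := real_inner_le_norm _ _
    _ ≤ ‖H‖ * ‖v‖ * ‖v‖ := by gcongr; exact H.le_opNorm v
    _ = ‖H‖ * ‖v‖ ^ 2 := by ring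

theorem IsPositive.norm_apply_sq_le {H : E →L[ℝ] E} (hH : H.IsPositive) (u : E) :
    ‖H u‖ ^ 2 ≤ ‖H‖ * ⟪H u, u⟫ := by
  let B : LinearMap.BilinForm ℝ E := (innerₗ E).comp (H : E →ₗ[ℝ] E)
  have hCS : ⟪H u, H u⟫ * ⟪H (H u), u⟫ ≤ ⟪H u, u⟫ * ⟪H (H u), H u⟫ :=
    B.apply_mul_apply_le_of_forall_zero_le hH.inner_nonneg_left u (H u)
  rw [hH.inner_left_eq_inner_right (H u) u, real_inner_self_eq_norm_sq] at hCS
  have hHu := hH.inner_nonneg_left u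
  rcases (sq_nonneg ‖H u‖).eq_or_lt with h0 | hpos
  · rw [← h0]; positivity
  refine le_of_mul_le_mul_right ?_ hpos
  calc ‖H u‖ ^ 2 * ‖H u‖ ^ 2 ≤ ⟪H u, u⟫ * ⟪H (H u), H u⟫ := hCS
    _ ≤ ⟪H u, u⟫ * (‖H‖ * ‖H u‖ ^ 2) := by gcongr; exact H.inner_apply_self_le _
    _ = ‖H‖ * ⟪H u, u⟫ * ‖H u‖ ^ 2 := by ring

variable [CompleteSpace E] {T H K : E →L[ℝ] E}

theorem inner_apply_comp_eq_neg_norm_sq_of_lyapunov (hH : IsSelfAdjoint H)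
    (hL : T * H + H * adjoint T + (2 : ℝ) • 1 = 0) (v : E) : ⟪T (H v), v⟫ = -‖v‖ ^ 2 := by
  have hv := congrArg (fun S => ⟪S v, v⟫) hL
  simp only [_root_.add_apply, mul_apply_eq_comp, _root_.smul_apply, one_apply_eq_self,
    _root_.zero_apply, inner_add_left, real_inner_smul_left, inner_zero_left] at hv
  have hHT : ⟪H (adjoint T v), v⟫ = ⟪T (H v), v⟫ := by
    rw [show ⟪H (adjoint T v), v⟫ = ⟪adjoint T v, H v⟫ from hH.isSymmetric _ _,
      adjoint_inner_left, real_inner_comm]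
  rw [hHT, real_inner_self_eq_norm_sq] at hv
  linarith

theorem hasDerivAt_inner_exp_smul_apply (hH : IsSelfAdjoint H) (hHK : Function.LeftInverse H K)
    (hT : ∀ v, ⟪T (H v), v⟫ = -‖v‖ ^ 2) (x : E) (s : ℝ) :
    HasDerivAt (fun s : ℝ => ⟪K (exp (s • T) x), exp (s • T) x⟫)
      (-2 * ‖K (exp (s • T) x)‖ ^ 2) s := by
  set y := fun s : ℝ => exp (s • T) x
  have hy : HasDerivAt y (T (y s)) s := by
    simpa [y] using (hasDerivAt_exp_smul_const' T s).clm_apply (hasDerivAt_const s x)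
  have hKy : HasDerivAt (fun s => K (y s)) (K (T (y s))) s := K.hasFDerivAt.comp_hasDerivAt s hy
  refine (hKy.inner ℝ hy).congr_deriv ?_
  set v := K (y s)
  have hys : y s = H v := (hHK (y s)).symm
  have hKH : ⟪K (T (H v)), H v⟫ = ⟪T (H v), v⟫ := by
    rw [show ⟪K (T (H v)), H v⟫ = ⟪H (K (T (H v))), v⟫ from (hH.isSymmetric _ _).symm, hHK]
  rw [hys, hKH, real_inner_comm (T (H v)) v, hT]
  ring

theorem inner_apply_exp_smul_le_of_lyapunov (hH : IsSelfAdjoint H)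
    (hHK : Function.LeftInverse H K) (hT : ∀ v, ⟪T (H v), v⟫ = -‖v‖ ^ 2) (hHpos : 0 < ‖H‖)
    (x : E) {t : ℝ} (ht : 0 ≤ t) :
    ⟪K (exp (t • T) x), exp (t • T) x⟫ ≤ ⟪K x, x⟫ * Real.exp (-2 * t / ‖H‖) := by
  have hdecay := le_mul_exp_of_hasDerivAt_le_mul (k := -2 / ‖H‖)
    (hasDerivAt_inner_exp_smul_apply hH hHK hT x) (fun s => ?_) ht
  · rwa [zero_smul, exp_zero, one_apply_eq_self, show -2 / ‖H‖ * t = -2 * t / ‖H‖ by ring]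
      at hdecay
  set v := K (exp (s • T) x)
  have hV : ⟪v, exp (s • T) x⟫ ≤ ‖H‖ * ‖v‖ ^ 2 := by
    rw [← hHK (exp (s • T) x), real_inner_comm]
    exact H.inner_apply_self_le v
  rw [div_mul_eq_mul_div, le_div_iff₀ hHpos]
  linarith

theorem norm_exp_smul_sq_le_of_lyapunov (hH : H.IsPositive) (hHK : Function.LeftInverse H K)
    (hT : ∀ v, ⟪T (H v), v⟫ = -‖v‖ ^ 2) {t : ℝ} (ht : 0 ≤ t) :
    ‖exp (t • T)‖ ^ 2 ≤ ‖H‖ * ‖K‖ * Real.exp (-2 * t / ‖H‖) := by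
  refine opNorm_sq_le_of_norm_apply_sq_le (by positivity) fun x => ?_
  set y := exp (t • T) x
  have hy : ‖y‖ ^ 2 ≤ ‖H‖ * ⟪K y, y⟫ := by
    have := hH.norm_apply_sq_le (K y)
    rwa [hHK y, real_inner_comm] at this
  rcases (norm_nonneg H).eq_or_lt with hH0 | hHpos
  · simpa [← hH0] using hy
  calc ‖y‖ ^ 2 ≤ ‖H‖ * ⟪K y, y⟫ := hy
    _ ≤ ‖H‖ * (⟪K x, x⟫ * Real.exp (-2 * t / ‖H‖)) := by
      gcongr
      exact inner_apply_exp_smul_le_of_lyapunov hH.isSelfAdjoint hHK hT hHpos x ht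
    _ ≤ ‖H‖ * (‖K‖ * ‖x‖ ^ 2 * Real.exp (-2 * t / ‖H‖)) := by
      gcongr
      exact K.inner_apply_self_le x
    _ = ‖H‖ * ‖K‖ * Real.exp (-2 * t / ‖H‖) * ‖x‖ ^ 2 := by ring

end ContinuousLinearMap

namespace Matrix

variable {𝕜 ι : Type*} [RCLike 𝕜] [Fintype ι] [DecidableEq ι]

theorem toEuclideanCLM_exp (M : Matrix ι ι 𝕜) :
    toEuclideanCLM (𝕜 := 𝕜) (exp M) = exp (toEuclideanCLM (𝕜 := 𝕜) M) := by
  open scoped Matrix.Norms.L2Operator in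
  let : NormedAlgebra ℚ (Matrix ι ι 𝕜) := NormedAlgebra.restrictScalars ℚ 𝕜 _
  refine map_exp _ ?_ M
  exact AddMonoidHomClass.continuous_of_bound _ 1 fun A => by
    rw [one_mul, l2_opNorm_toEuclideanCLM]

open scoped ComplexOrder in
theorem PosSemidef.isPositive_toEuclideanCLM {M : Matrix ι ι 𝕜} (hM : M.PosSemidef) :
    (toEuclideanCLM (𝕜 := 𝕜) M).IsPositive := by
  rwa [← ContinuousLinearMap.isPositive_toLinearMap_iff, coe_toEuclideanCLM_eq_toEuclideanLin,
    isPositive_toEuclideanLin_iff]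

theorem toEuclideanCLM_transpose (M : Matrix ι ι ℝ) :
    toEuclideanCLM (𝕜 := ℝ) Mᵀ = ContinuousLinearMap.adjoint (toEuclideanCLM (𝕜 := ℝ) M) := by
  rw [← conjTranspose_eq_transpose_of_trivial, ← star_eq_conjTranspose, map_star,
    ContinuousLinearMap.star_eq_adjoint]

end Matrix

/-- (Hu–Liu bound) If `H` is real symmetric positive definite with
`A H + H Aᵀ + 2I = 0`, then `‖exp(tA)‖₂² ≤ ‖H‖₂ ‖H⁻¹‖₂ e^{−2t/‖H‖₂}` for all `t ≥ 0`. -/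
theorem matrix_exponential_bound_via_lyapunov_certificate (n : ℕ)
    (A H : Matrix (Fin n) (Fin n) ℝ) (hH : H.PosDef)
    (hLyap : A * H + H * Aᵀ + (2 : ℝ) • (1 : Matrix (Fin n) (Fin n) ℝ) = 0) :
    ∀ t : ℝ, 0 ≤ t →
      specNorm (NormedSpace.exp (t • A)) ^ 2
        ≤ specNorm H * specNorm H⁻¹ * Real.exp (-2 * t / specNorm H) := by
  intro t ht
  set φ := toEuclideanCLM (n := Fin n) (𝕜 := ℝ)
  have hφH := hH.posSemidef.isPositive_toEuclideanCLM
  have hinv : Function.LeftInverse (φ H) (φ H⁻¹) := fun w => by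
    rw [← mul_apply_eq_comp, ← map_mul, H.mul_nonsing_inv hH.det_pos.ne'.isUnit, map_one,
      one_apply_eq_self]
  have hL : φ A * φ H + φ H * ContinuousLinearMap.adjoint (φ A) + (2 : ℝ) • 1 = 0 := by
    simpa [← toEuclideanCLM_transpose, φ] using congrArg φ hLyap
  simpa only [specNorm, toEuclideanCLM_exp, map_smul] using
    ContinuousLinearMap.norm_exp_smul_sq_le_of_lyapunov hφH hinv
      (ContinuousLinearMap.inner_apply_comp_eq_neg_norm_sq_of_lyapunov hφH.isSelfAdjoint hL) ht
end

section
/- Let n, R ∈ ℕ, let A be a complex n×n matrix and B a complex n×R matrix, and let α₁, …, α_j ∈ ℂ with Re(αᵢ) < 0 and A + αᵢI invertible for each i. Define the low-rank ADI (LR-ADI) quantities W₀ := B, Hᵢ := (A + αᵢI)⁻¹·Wᵢ₋₁, Wᵢ := Wᵢ₋₁ − 2Re(αᵢ)·Hᵢ for 1 ≤ i ≤ j, and define the ADI iterates X₀ := 0, Xᵢ := Cᵢ·Xᵢ₋₁·Cᵢᴴ + Bᵢ·Bᵢᴴ with Cᵢ := (A + αᵢI)⁻¹·(A − conj(αᵢ)I)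 and Bᵢ := √(−2Re(αᵢ))·(A + αᵢI)⁻¹·B. Then X_j = Σ_{i=1}^{j} (−2Re(αᵢ))·Hᵢ·Hᵢᴴ; equivalently, X_j = Z_j·Z_jᴴ for the low-rank factor Z_j := [√(−2Re(α₁))H₁, …, √(−2Re(α_j))H_j] ∈ ℂ^{n×Rj}. -/
open Matrix

private lemma key1 {n : ℕ} (β : ℂ) (A P : Matrix (Fin n) (Fin n) ℂ) :
    (A - (starRingEnd ℂ β) • 1) * P * (A - (starRingEnd ℂ β) • 1)ᴴ
      - (A + β • 1) * P * (A + β • 1)ᴴ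
    = -(((2 * β.re : ℝ) : ℂ) • (A * P + P * Aᴴ)) := by
  have hc : ((2 * β.re : ℝ) : ℂ) = β + starRingEnd ℂ β := (Complex.add_conj β).symm
  simp only [conjTranspose_sub, conjTranspose_add, conjTranspose_smul, conjTranspose_one,
    sub_mul, mul_sub, add_mul, mul_add, smul_mul_assoc, mul_smul_comm, one_mul, mul_one,
    RCLike.star_def, Complex.conj_conj, hc]
  module

private lemma key2 {n : ℕ} (γ : ℂ) (A P : Matrix (Fin n) (Fin n) ℂ)
    (h : IsUnit (A + γ • (1 : Matrix (Fin n) (Fin n) ℂ))) :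
    ((A + γ • 1)⁻¹ * (A - (starRingEnd ℂ γ) • 1)) * P
        * (((A + γ • 1)⁻¹ * (A - (starRingEnd ℂ γ) • 1)))ᴴ - P
    = -(((2 * γ.re : ℝ) : ℂ) •
        ((A + γ • 1)⁻¹ * (A * P + P * Aᴴ) * ((A + γ • 1)⁻¹)ᴴ)) := by
  set N := A + γ • (1 : Matrix (Fin n) (Fin n) ℂ) with hN
  have hd : IsUnit N.det := (Matrix.isUnit_iff_isUnit_det N).mp h
  have h1 : N⁻¹ * N = 1 := Matrix.nonsing_inv_mul N hd
  have h2 : N * N⁻¹ = 1 := Matrix.mul_nonsing_inv N hd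
  have hP : P = N⁻¹ * (N * P * Nᴴ) * (N⁻¹)ᴴ := by
    calc P = (N⁻¹ * N) * P * (N⁻¹ * N)ᴴ := by rw [h1]; simp
    _ = N⁻¹ * (N * P * Nᴴ) * (N⁻¹)ᴴ := by
        rw [conjTranspose_mul]; simp only [Matrix.mul_assoc]
  calc N⁻¹ * (A - (starRingEnd ℂ γ) • 1) * P * (N⁻¹ * (A - (starRingEnd ℂ γ) • 1))ᴴ - P
      = N⁻¹ * ((A - (starRingEnd ℂ γ) • 1) * P * (A - (starRingEnd ℂ γ) • 1)ᴴ
          - N * P * Nᴴ) * (N⁻¹)ᴴ := by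
        rw [conjTranspose_mul]
        nth_rewrite 2 [hP]
        simp only [Matrix.mul_sub, Matrix.sub_mul, Matrix.mul_assoc]
    _ = N⁻¹ * (-(((2 * γ.re : ℝ) : ℂ) • (A * P + P * Aᴴ))) * (N⁻¹)ᴴ := by
        rw [← key1 γ A P]
    _ = -(((2 * γ.re : ℝ) : ℂ) • (N⁻¹ * (A * P + P * Aᴴ) * (N⁻¹)ᴴ)) := by
        simp only [Matrix.mul_add, Matrix.add_mul, mul_smul_comm, smul_mul_assoc, smul_add,
          Matrix.neg_mul, Matrix.mul_neg, Matrix.mul_assoc, neg_add]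

/-- (Li–White) Low-rank form of the ADI iteration: with `W₀ = B`,
`Hᵢ = (A + αᵢ I)⁻¹ Wᵢ₋₁`, `Wᵢ = Wᵢ₋₁ − 2 Re(αᵢ) Hᵢ`, the ADI iterates `X₀ = 0`,
`Xᵢ = Cᵢ Xᵢ₋₁ Cᵢᴴ + Bᵢ Bᵢᴴ` satisfy `X_j = Σ_{i=1}^j (−2 Re αᵢ) Hᵢ Hᵢᴴ`; equivalently
`X_j = Z_j Z_jᴴ` for the low-rank factor `Z_j = [√(−2Re α₁) H₁, …, √(−2Re α_j) H_j]`. -/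
theorem lr_adi_factorization (n R j : ℕ)
    (A : Matrix (Fin n) (Fin n) ℂ) (B : Matrix (Fin n) (Fin R) ℂ)
    (α : ℕ → ℂ)
    (hα : ∀ i, 1 ≤ i → i ≤ j → (α i).re < 0)
    (hinv : ∀ i, 1 ≤ i → i ≤ j → IsUnit (A + α i • (1 : Matrix (Fin n) (Fin n) ℂ)))
    (W Hm : ℕ → Matrix (Fin n) (Fin R) ℂ)
    (hW0 : W 0 = B)
    (hHm : ∀ i, 1 ≤ i → i ≤ j → Hm i = (A + α i • 1)⁻¹ * W (i - 1))
    (hW : ∀ i, 1 ≤ i → i ≤ j → W i = W (i - 1) - ((2 * (α i).re : ℝ) : ℂ) • Hm i)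
    (C : ℕ → Matrix (Fin n) (Fin n) ℂ)
    (hC : ∀ i, C i = (A + α i • 1)⁻¹ * (A - (starRingEnd ℂ (α i)) • 1))
    (Bm : ℕ → Matrix (Fin n) (Fin R) ℂ)
    (hBm : ∀ i, Bm i = (Real.sqrt (-2 * (α i).re) : ℂ) • ((A + α i • 1)⁻¹ * B))
    (X : ℕ → Matrix (Fin n) (Fin n) ℂ)
    (hX0 : X 0 = 0)
    (hX : ∀ i, 1 ≤ i → i ≤ j → X i = C i * X (i - 1) * (C i)ᴴ + Bm i * (Bm i)ᴴ)
    (Z : Matrix (Fin n) (Fin j × Fin R) ℂ)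
    (hZ : Z = Matrix.of fun p q =>
      (Real.sqrt (-2 * (α (q.1.val + 1)).re) : ℂ) * Hm (q.1.val + 1) p q.2) :
    X j = (∑ i ∈ Finset.Icc 1 j, ((-2 * (α i).re : ℝ) : ℂ) • (Hm i * (Hm i)ᴴ)) ∧
      X j = Z * Zᴴ := by
  set S : ℕ → Matrix (Fin n) (Fin n) ℂ :=
    fun k => ∑ i ∈ Finset.Icc 1 k, ((-2 * (α i).re : ℝ) : ℂ) • (Hm i * (Hm i)ᴴ) with hS
  -- basic recurrences
  have hNH : ∀ i, 1 ≤ i → i ≤ j → (A + α i • 1) * Hm i = W (i - 1) := by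
    intro i h1 h2
    rw [hHm i h1 h2, ← Matrix.mul_assoc,
      Matrix.mul_nonsing_inv _ ((Matrix.isUnit_iff_isUnit_det _).mp (hinv i h1 h2)),
      Matrix.one_mul]
  have hWnext : ∀ i, 1 ≤ i → i ≤ j →
      W i = (A - (starRingEnd ℂ (α i)) • 1) * Hm i := by
    intro i h1 h2
    rw [hW i h1 h2, ← hNH i h1 h2]
    have hc : ((2 * (α i).re : ℝ) : ℂ) = α i + starRingEnd ℂ (α i) :=
      (Complex.add_conj (α i)).symm
    rw [hc]
    simp only [Matrix.add_mul, Matrix.sub_mul, Matrix.smul_mul, Matrix.one_mul, add_smul]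
    module
  -- telescoping lemma
  have tele : ∀ m, m ≤ j → ∀ γ : ℂ, IsUnit (A + γ • (1 : Matrix (Fin n) (Fin n) ℂ)) →
      ((A + γ • 1)⁻¹ * (A - (starRingEnd ℂ γ) • 1)) * S m
          * (((A + γ • 1)⁻¹ * (A - (starRingEnd ℂ γ) • 1)))ᴴ
      = S m + -(((2 * γ.re : ℝ) : ℂ) •
          ((A + γ • 1)⁻¹ * (W m * (W m)ᴴ - B * Bᴴ) * ((A + γ • 1)⁻¹)ᴴ)) := by
    intro m
    induction m with
    | zero =>
      intro _ γ hγ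
      simp [hS, hW0]
    | succ m ih =>
      intro hm1 γ hγ
      have hmj : m ≤ j := le_trans (Nat.le_succ m) hm1
      have h1 : 1 ≤ m + 1 := Nat.succ_le_succ (Nat.zero_le m)
      have hSsucc : S (m + 1) = S m
          + ((-2 * (α (m+1)).re : ℝ) : ℂ) • (Hm (m+1) * (Hm (m+1))ᴴ) := by
        rw [hS]
        rw [← Finset.sum_Icc_succ_top h1]
      set P := Hm (m+1) * (Hm (m+1))ᴴ with hPdef
      have hWW : W (m+1) * (W (m+1))ᴴ - W m * (W m)ᴴ
          = -(((2 * (α (m+1)).re : ℝ) : ℂ) • (A * P + P * Aᴴ)) := by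
        have e1 : W (m+1) = (A - (starRingEnd ℂ (α (m+1))) • 1) * Hm (m+1) :=
          hWnext (m+1) h1 hm1
        have e2 : W m = (A + α (m+1) • 1) * Hm (m+1) := by
          have := hNH (m+1) h1 hm1; simpa using this.symm
        rw [e1, e2, ← key1 (α (m+1)) A P]
        simp only [hPdef, conjTranspose_mul, Matrix.mul_assoc]
      rw [hSsucc, Matrix.mul_add, Matrix.add_mul, ih hmj γ hγ]
      have hkey2 := key2 γ A P hγ
      have hCP : ((A + γ • 1)⁻¹ * (A - (starRingEnd ℂ γ) • 1)) * P
          * (((A + γ • 1)⁻¹ * (A - (starRingEnd ℂ γ) • 1)))ᴴ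
          = P + -(((2 * γ.re : ℝ) : ℂ) •
            ((A + γ • 1)⁻¹ * (A * P + P * Aᴴ) * ((A + γ • 1)⁻¹)ᴴ)) := by
        rw [← hkey2]; abel
      rw [mul_smul_comm, smul_mul_assoc, hCP]
      have hAPP : ((-2 * (α (m+1)).re : ℝ) : ℂ) • (A * P + P * Aᴴ)
          = W (m+1) * (W (m+1))ᴴ - W m * (W m)ᴴ := by
        rw [hWW]; push_cast; module
      -- now pure smul/linear algebra
      have expand : ∀ Q Q' : Matrix (Fin n) (Fin n) ℂ,
          (A + γ • 1)⁻¹ * (Q - Q') * ((A + γ • 1)⁻¹)ᴴ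
          = (A + γ • 1)⁻¹ * Q * ((A + γ • 1)⁻¹)ᴴ
            - (A + γ • 1)⁻¹ * Q' * ((A + γ • 1)⁻¹)ᴴ := by
        intro Q Q'; simp only [Matrix.mul_sub, Matrix.sub_mul]
      rw [smul_add]
      have swap : ((-2 * (α (m+1)).re : ℝ) : ℂ) •
          -(((2 * γ.re : ℝ) : ℂ) • ((A + γ • 1)⁻¹ * (A * P + P * Aᴴ) * ((A + γ • 1)⁻¹)ᴴ))
          = -(((2 * γ.re : ℝ) : ℂ) • ((A + γ • 1)⁻¹ *
              (W (m+1) * (W (m+1))ᴴ - W m * (W m)ᴴ) * ((A + γ • 1)⁻¹)ᴴ)) := by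
        rw [← hAPP]
        simp only [mul_smul_comm, smul_mul_assoc, smul_neg, smul_smul]
        rw [mul_comm]
      rw [swap]
      rw [expand (W (m+1) * (W (m+1))ᴴ) (W m * (W m)ᴴ),
        expand (W m * (W m)ᴴ) (B * Bᴴ),
        expand (W (m+1) * (W (m+1))ᴴ) (B * Bᴴ)]
      simp only [smul_sub]
      abel
  -- main lemma
  have main : ∀ k, k ≤ j → X k = S k := by
    intro k
    induction k with
    | zero => intro _; simp [hX0, hS]
    | succ k ih =>
      intro hk1
      have hkj : k ≤ j := le_trans (Nat.le_succ k) hk1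
      have h1 : 1 ≤ k + 1 := Nat.succ_le_succ (Nat.zero_le k)
      have hre : (α (k+1)).re < 0 := hα (k+1) h1 hk1
      have hu := hinv (k+1) h1 hk1
      rw [hX (k+1) h1 hk1]
      simp only [Nat.add_sub_cancel]
      rw [ih hkj, hC (k+1), tele k hkj (α (k+1)) hu]
      have hBB : Bm (k+1) * (Bm (k+1))ᴴ
          = ((-2 * (α (k+1)).re : ℝ) : ℂ) •
            ((A + α (k+1) • 1)⁻¹ * (B * Bᴴ) * ((A + α (k+1) • 1)⁻¹)ᴴ) := by
        rw [hBm (k+1)]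
        rw [conjTranspose_smul, conjTranspose_mul]
        simp only [Matrix.smul_mul, Matrix.mul_smul, smul_smul, RCLike.star_def,
          Complex.conj_ofReal]
        rw [← Complex.ofReal_mul,
          Real.mul_self_sqrt (by nlinarith : (0:ℝ) ≤ -2 * (α (k+1)).re)]
        simp only [Matrix.mul_assoc]
      rw [hBB]
      have hH : Hm (k+1) = (A + α (k+1) • 1)⁻¹ * W k := by
        have := hHm (k+1) h1 hk1; simpa using this
      have hSsucc : S (k + 1) = S k
          + ((-2 * (α (k+1)).re : ℝ) : ℂ) • (Hm (k+1) * (Hm (k+1))ᴴ) := by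
        rw [hS, ← Finset.sum_Icc_succ_top h1]
      rw [hSsucc, hH]
      have cast2 : -(((2 * (α (k+1)).re : ℝ) : ℂ)) = ((-2 * (α (k+1)).re : ℝ) : ℂ) := by
        push_cast; ring
      rw [← cast2]
      simp only [conjTranspose_mul, Matrix.mul_sub, Matrix.sub_mul, smul_sub, neg_smul,
        neg_sub, Matrix.mul_assoc]
      abel
  have part1 : X j = S j := main j le_rfl
  refine ⟨part1, ?_⟩
  rw [part1]
  -- second part : S j = Z * Zᴴ
  have hsum : S j = ∑ q1 : Fin j,
      ((-2 * (α (q1.val + 1)).re : ℝ) : ℂ) • (Hm (q1.val+1) * (Hm (q1.val+1))ᴴ) := by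
    rw [hS]
    simp only
    rw [← Finset.Ico_add_one_right_eq_Icc, Finset.sum_Ico_eq_sum_range,
      ← Fin.sum_univ_eq_sum_range (fun i => ((-2 * (α (1 + i)).re : ℝ) : ℂ) •
        (Hm (1 + i) * (Hm (1 + i))ᴴ)) (j + 1 - 1)]
    have : j + 1 - 1 = j := rfl
    rw [this]
    exact Finset.sum_congr rfl fun q _ => by rw [add_comm 1 q.val]
  rw [hsum]
  ext p p'
  rw [Matrix.mul_apply, Matrix.sum_apply]
  rw [Fintype.sum_prod_type]
  refine Finset.sum_congr rfl fun q1 _ => ?_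
  have hre : (α (q1.val + 1)).re < 0 :=
    hα (q1.val + 1) (Nat.succ_le_succ (Nat.zero_le _)) (Nat.succ_le_of_lt q1.isLt)
  have hsq : (Real.sqrt (-2 * (α (q1.val+1)).re) : ℂ)
      * (Real.sqrt (-2 * (α (q1.val+1)).re) : ℂ) = ((-2 * (α (q1.val+1)).re : ℝ) : ℂ) := by
    rw [← Complex.ofReal_mul, Real.mul_self_sqrt (by nlinarith : (0:ℝ) ≤ -2 * (α (q1.val+1)).re)]
  rw [Matrix.smul_apply, Matrix.mul_apply, Finset.smul_sum]
  refine Finset.sum_congr rfl fun q2 _ => ?_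
  rw [hZ]
  simp only [Matrix.conjTranspose_apply, Matrix.of_apply, star_mul', RCLike.star_def,
    Complex.conj_ofReal, smul_eq_mul]
  rw [← hsq]
  ring
end
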